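/- arXiv:1806.07931 — 5 statements merged into one kernel-verified Lean document; each statement's English description precedes it below -/
import Mathlib

section
/- A function f defined on a nonempty convex set X in R^n is pseudoconvex with respect to the lower Dini derivative if and only if for all x, y in X, the restriction φ(t) = f(x + t(y-x)), defined on X(x,y) = {t ∈ R : x + t(y-x) ∈ X}, is pseudoconvex with respect to the lower Dini derivative (as a function of one variable). -/
open Filter Set

/-- Lower Dini directional derivative of a function of one real variable. -/
noncomputable def dini (φ : ℝ → ℝ) (s u : ℝ) : ℝ :=
  liminf (fun h : ℝ => (φ (s + h * u) - φ s) / h) (nhdsWithin 0 (Ioi 0))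

/-- Pseudoconvexity w.r.t. the lower Dini derivative, one variable. -/
def PseudoconvexOn (φ : ℝ → ℝ) (I : Set ℝ) : Prop :=
  ∀ s ∈ I, ∀ t ∈ I, φ t < φ s → dini φ s (t - s) < 0

/-- A direction `u` is admissible at `s` relative to `I`. -/
def Admissible (I : Set ℝ) (s u : ℝ) : Prop :=
  ∃ δ > 0, ∀ h ∈ Ioo (0:ℝ) δ, s + h * u ∈ I

/-- `s` is a stationary point of `φ` relative to `I`. -/
def Stationary (φ : ℝ → ℝ) (I : Set ℝ) (s : ℝ) : Prop :=
  ∀ u : ℝ, Admissible I s u → 0 ≤ dini φ s u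

/-- Lower Dini directional derivative of `f : ℝⁿ → ℝ` at `x` in direction `u`. -/
noncomputable def diniV {n : ℕ} (f : (Fin n → ℝ) → ℝ) (x u : Fin n → ℝ) : ℝ :=
  liminf (fun h : ℝ => (f (x + h • u) - f x) / h) (nhdsWithin 0 (Ioi 0))

/-- Pseudoconvexity of `f` on `X ⊆ ℝⁿ` w.r.t. the lower Dini derivative. -/
def PseudoconvexOnV {n : ℕ} (f : (Fin n → ℝ) → ℝ) (X : Set (Fin n → ℝ)) : Prop :=
  ∀ x ∈ X, ∀ y ∈ X, f y < f x → diniV f x (y - x) < 0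

/-- A direction `u` is admissible at `x` relative to `X`. -/
def AdmissibleV {n : ℕ} (X : Set (Fin n → ℝ)) (x u : Fin n → ℝ) : Prop :=
  ∃ δ > 0, ∀ h ∈ Ioo (0:ℝ) δ, x + h • u ∈ X

/-- `x` is a stationary point of `f` relative to `X`. -/
def StationaryV {n : ℕ} (f : (Fin n → ℝ) → ℝ) (X : Set (Fin n → ℝ)) (x : Fin n → ℝ) : Prop :=
  ∀ u : Fin n → ℝ, AdmissibleV X x u → 0 ≤ diniV f x u

/-- `f` is radially lower semicontinuous on `X`: lsc on every segment. -/
def RadiallyLSC {n : ℕ} (f : (Fin n → ℝ) → ℝ) (X : Set (Fin n → ℝ)) : Prop :=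
  ∀ x ∈ X, ∀ y ∈ X,
    LowerSemicontinuousOn (fun t : ℝ => f (x + t • (y - x))) (Icc 0 1)

/-- `f` is radially upper semicontinuous on `X`: usc on every segment. -/
def RadiallyUSC {n : ℕ} (f : (Fin n → ℝ) → ℝ) (X : Set (Fin n → ℝ)) : Prop :=
  ∀ x ∈ X, ∀ y ∈ X,
    UpperSemicontinuousOn (fun t : ℝ => f (x + t • (y - x))) (Icc 0 1)

/-- `f` is quasiconvex on `X`. -/
def QuasiconvexOnSeg {n : ℕ} (f : (Fin n → ℝ) → ℝ) (X : Set (Fin n → ℝ)) : Prop :=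
  ∀ x ∈ X, ∀ y ∈ X, ∀ t ∈ Icc (0:ℝ) 1, f (x + t • (y - x)) ≤ max (f x) (f y)

/-- `f` is semistrictly quasiconvex on `X`. -/
def SemistrictlyQuasiconvexOn {n : ℕ} (f : (Fin n → ℝ) → ℝ) (X : Set (Fin n → ℝ)) : Prop :=
  ∀ x ∈ X, ∀ y ∈ X, f y < f x → ∀ t ∈ Ioo (0:ℝ) 1, f (x + t • (y - x)) < f x

theorem dini_comp_line {n : ℕ} (f : (Fin n → ℝ) → ℝ) (x v : Fin n → ℝ) (s u : ℝ) :
    dini (fun t : ℝ => f (x + t • v)) s u = diniV f (x + s • v) (u • v) := by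
  unfold dini diniV
  simp only [add_smul, mul_smul, add_assoc]

theorem PseudoconvexOnV.pseudoconvexOn_comp_line {n : ℕ} {f : (Fin n → ℝ) → ℝ}
    {X : Set (Fin n → ℝ)} (hf : PseudoconvexOnV f X) (x v : Fin n → ℝ) :
    PseudoconvexOn (fun t : ℝ => f (x + t • v)) {t : ℝ | x + t • v ∈ X} := by
  intro s hs t ht hlt
  rw [dini_comp_line, sub_smul, ← add_sub_add_left_eq_sub _ _ x]
  exact hf _ hs _ ht hlt

theorem pseudoconvexOnV_of_forall_segment {n : ℕ} {f : (Fin n → ℝ) → ℝ}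
    {X : Set (Fin n → ℝ)}
    (hf : ∀ x ∈ X, ∀ y ∈ X,
      PseudoconvexOn (fun t : ℝ => f (x + t • (y - x))) {t : ℝ | x + t • (y - x) ∈ X}) :
    PseudoconvexOnV f X := by
  intro x hx y hy hlt
  -- the parameters `0` and `1` of the segment are the points `x` and `y`
  have h := hf x hx y hy 0 (by simpa using hx) 1 (by simpa using hy) (by simpa using hlt)
  simpa [dini_comp_line] using h

theorem stmt0_general {n : ℕ} (X : Set (Fin n → ℝ))
    (f : (Fin n → ℝ) → ℝ) :
    PseudoconvexOnV f X ↔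
      ∀ x ∈ X, ∀ y ∈ X,
        PseudoconvexOn (fun t : ℝ => f (x + t • (y - x)))
          {t : ℝ | x + t • (y - x) ∈ X} :=
  ⟨fun hf x _ y _ => hf.pseudoconvexOn_comp_line x (y - x), pseudoconvexOnV_of_forall_segment⟩

theorem stmt0 {n : ℕ} (X : Set (Fin n → ℝ)) (hX : Convex ℝ X) (hne : X.Nonempty)
    (f : (Fin n → ℝ) → ℝ) :
    PseudoconvexOnV f X ↔
      ∀ x ∈ X, ∀ y ∈ X,
        PseudoconvexOn (fun t : ℝ => f (x + t • (y - x)))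
          {t : ℝ | x + t • (y - x) ∈ X} :=
  stmt0_general X f
end

section
/- Let φ : I → R be a lower semicontinuous function on an interval I ⊆ R that is pseudoconvex with respect to the lower Dini derivative. If a, b ∈ I with a < b and φ(a) < φ(b), then φ is strictly monotone increasing on I ∩ [b, +∞). -/
open Filter Set

/-- The set of global minimizers of `φ` over `I`. -/
def ArgminSet (φ : ℝ → ℝ) (I : Set ℝ) : Set ℝ := {t ∈ I | ∀ s ∈ I, φ t ≤ φ s}

/-!
Pseudoconvexity says that a point `s` which is a local minimizer of `φ` on the segment towards
`t` satisfies `φ s ≤ φ t`. Together with lower semicontinuity this makes `φ` quasiconvex: if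
`φ v` exceeded `max (φ u) (φ w)` for some `u < v < w`, then `φ` would exceed it on a whole
interval `[p, v]`, and a minimizer of `φ` on `[p, v]` would be a one-sided local minimizer pointing
towards `u` or `w`. Quasiconvexity and `φ a < φ b` give `φ b ≤ φ x ≤ φ y` for `b ≤ x < y`; if
`φ x = φ y`, then `φ` is constant on `[x, y]`, so `y` is a local minimizer towards `a`, and
pseudoconvexity yields the contradiction `φ y ≤ φ a`.
-/

open Topology

variable {φ : ℝ → ℝ} {I : Set ℝ}

lemma dini_nonneg_of_eventually_le {s u : ℝ} (h : ∀ᶠ r in 𝓝[>] 0, φ s ≤ φ (s + r * u)) :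
    0 ≤ dini φ s u := by
  have hq : ∀ᶠ r in 𝓝[>] (0:ℝ), 0 ≤ (φ (s + r * u) - φ s) / r :=
    (h.and self_mem_nhdsWithin).mono fun r ⟨hr, hr0⟩ => div_nonneg (sub_nonneg.2 hr) hr0.le
  rw [dini, liminf_eq]
  by_cases hb : BddAbove {a | ∀ᶠ r in 𝓝[>] (0:ℝ), a ≤ (φ (s + r * u) - φ s) / r}
  · exact le_csSup hb hq
  · -- the junk value `sSup = 0` of an unbounded set
    rw [Real.sSup_of_not_bddAbove hb]

lemma tendsto_add_mul_sub_nhdsGT_nhdsWithin_uIcc (s t : ℝ) :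
    Tendsto (fun r => s + r * (t - s)) (𝓝[>] 0) (𝓝[uIcc s t] s) := by
  refine tendsto_nhdsWithin_iff.2 ⟨?_, ?_⟩
  · have : Continuous fun r : ℝ => s + r * (t - s) := by fun_prop
    simpa using this.continuousWithinAt.tendsto (x := 0) (s := Ioi 0)
  · filter_upwards [Ioo_mem_nhdsGT one_pos] with r hr
    simpa only [smul_eq_mul] using
      convex_uIcc s t |>.add_smul_sub_mem left_mem_uIcc right_mem_uIcc (Ioo_subset_Icc_self hr)

theorem PseudoconvexOn.le_of_isLocalMinOn (hpc : PseudoconvexOn φ I) {s t : ℝ} (hs : s ∈ I)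
    (ht : t ∈ I) (hmin : IsLocalMinOn φ (uIcc s t) s) : φ s ≤ φ t :=
  not_lt.1 fun hlt => (hpc s hs t ht hlt).not_ge <|
    dini_nonneg_of_eventually_le ((tendsto_add_mul_sub_nhdsGT_nhdsWithin_uIcc s t).eventually hmin)

theorem PseudoconvexOn.quasiconvexOn (hI : I.OrdConnected) (hlsc : LowerSemicontinuousOn φ I)
    (hpc : PseudoconvexOn φ I) : QuasiconvexOn ℝ I φ := by
  refine fun r => convex_iff_ordConnected.2 ⟨fun u hu w hw v hv => ?_⟩
  have hvI : v ∈ I := hI.out hu.1 hw.1 hv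
  refine ⟨hvI, ?_⟩
  by_contra! hrv
  have huv : u < v := hv.1.lt_of_ne (by rintro rfl; exact hrv.not_ge hu.2)
  have hIv : I ∈ 𝓝[≤] v := mem_of_superset (Icc_mem_nhdsLE huv) (hI.out hu.1 hvI)
  obtain ⟨p₀, hp₀v, hp₀⟩ :=
    mem_nhdsLE_iff_exists_Icc_subset.1 (nhdsWithin_le_of_mem hIv (hlsc v hvI r hrv))
  set p := max p₀ u
  have hpv : p < v := max_lt hp₀v huv
  have hpI : Icc p v ⊆ I := (Icc_subset_Icc_left (le_max_right _ _)).trans (hI.out hu.1 hvI)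
  obtain ⟨m, hm, hmin⟩ := (hlsc.mono hpI).exists_isMinOn (nonempty_Icc.2 hpv.le) isCompact_Icc
  have hmI : m ∈ I := hpI hm
  have hφm : φ m ≤ r := by
    rcases hm.2.lt_or_eq with hmv | rfl
    · have hJ : Icc p v ∈ 𝓝[uIcc m w] m :=
        nhdsWithin_mono _ (uIcc_of_le (hmv.le.trans hv.2) ▸ Icc_subset_Ici_self)
          (Icc_mem_nhdsGE_of_mem ⟨hm.1, hmv⟩)
      exact (hpc.le_of_isLocalMinOn hmI hw.1 (hmin.filter_mono (le_principal_iff.2 hJ))).trans hw.2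
    · have hJ : Icc p m ∈ 𝓝[uIcc m u] m :=
        nhdsWithin_mono _ (uIcc_of_ge huv.le ▸ Icc_subset_Iic_self) (Icc_mem_nhdsLE hpv)
      exact (hpc.le_of_isLocalMinOn hmI hu.1 (hmin.filter_mono (le_principal_iff.2 hJ))).trans hu.2
  exact (hp₀ (show m ∈ Icc p₀ v from ⟨(le_max_left _ _).trans hm.1, hm.2⟩)).not_ge hφm

theorem QuasiconvexOn.le_max_of_mem_Icc (hq : QuasiconvexOn ℝ I φ) {u v w : ℝ} (hu : u ∈ I)
    (hw : w ∈ I) (hv : v ∈ Icc u w) : φ v ≤ max (φ u) (φ w) :=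
  ((hq _).ordConnected.out ⟨hu, le_max_left _ _⟩ ⟨hw, le_max_right _ _⟩ hv).2

theorem QuasiconvexOn.le_of_lt_of_mem_Icc (hq : QuasiconvexOn ℝ I φ) {a x t : ℝ} (ha : a ∈ I)
    (ht : t ∈ I) (hx : x ∈ Icc a t) (h : φ a < φ x) : φ x ≤ φ t :=
  (le_max_iff.1 (hq.le_max_of_mem_Icc ha ht hx)).resolve_left h.not_ge

theorem stmt1_general (I : Set ℝ) (hI : I.OrdConnected) (φ : ℝ → ℝ)
    (hlsc : LowerSemicontinuousOn φ I) (hpc : PseudoconvexOn φ I)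
    (a b : ℝ) (ha : a ∈ I) (hab : a < b) (hφ : φ a < φ b) :
    StrictMonoOn φ (I ∩ Ici b) := by
  have hq := hpc.quasiconvexOn hI hlsc
  intro x ⟨hxI, hbx⟩ y ⟨hyI, _⟩ hxy
  have hax : a < x := hab.trans_le hbx
  have hφx : φ a < φ x := hφ.trans_le (hq.le_of_lt_of_mem_Icc ha hxI ⟨hab.le, hbx⟩ hφ)
  have hx_le : ∀ z ∈ Icc x y, φ x ≤ φ z := fun z hz =>
    hq.le_of_lt_of_mem_Icc ha (hI.out hxI hyI hz) ⟨hax.le, hz.1⟩ hφx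
  refine (hx_le y ⟨hxy.le, le_rfl⟩).lt_of_ne fun heq => ?_
  have hJ : Icc x y ∈ 𝓝[uIcc y a] y :=
    nhdsWithin_mono _ (uIcc_of_ge (hax.trans hxy).le ▸ Icc_subset_Iic_self) (Icc_mem_nhdsLE hxy)
  have hmin : IsMinOn φ (Icc x y) y := fun z hz => heq ▸ hx_le z hz
  exact (hpc.le_of_isLocalMinOn hyI ha (hmin.filter_mono (le_principal_iff.2 hJ))).not_gt
    (heq ▸ hφx)

theorem stmt1 (I : Set ℝ) (hI : I.OrdConnected) (φ : ℝ → ℝ)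
    (hlsc : LowerSemicontinuousOn φ I) (hpc : PseudoconvexOn φ I)
    (a b : ℝ) (ha : a ∈ I) (hb : b ∈ I) (hab : a < b) (hφ : φ a < φ b) :
    StrictMonoOn φ (I ∩ Ici b) :=
  stmt1_general I hI φ hlsc hpc a b ha hab hφ
end

section
/- Let φ : I → R be a lower semicontinuous function on an interval I ⊆ R that is pseudoconvex with respect to the lower Dini derivative. If a, b ∈ I with a < b and φ(a) > φ(b), then φ is strictly monotone decreasing on I ∩ (-∞, a]. -/
open Filter Set Topology

/-!
A lower semicontinuous pseudoconvex function on an interval is quasiconvex: if `φ z` exceeded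
`max (φ x) (φ y)` for some `x < z < y`, then by lower semicontinuity `φ` would attain a minimum
on a small interval around `z` that is still above `max (φ x) (φ y)`, and pseudoconvexity lets one
descend from that minimizer, towards `x` or towards `y`, without leaving the interval.
Pseudoconvexity also excludes plateaus: if `x < y < z` and `φ z < φ y`, then `φ y < φ x`.
Applied to `y ≤ a < b`, this first gives `φ b < φ y` and then `φ y < φ x` for every `x < y`.
-/

lemma frequently_lt_of_dini_neg {φ : ℝ → ℝ} {s u : ℝ} (h : dini φ s u < 0) :
    ∃ᶠ h in 𝓝[>] 0, φ (s + h * u) < φ s := by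
  by_contra hc
  have hev : ∀ᶠ h in 𝓝[>] 0, 0 ≤ (φ (s + h * u) - φ s) / h := by
    filter_upwards [not_frequently.1 hc, self_mem_nhdsWithin] with h hle hpos
    exact div_nonneg (sub_nonneg.2 (not_lt.1 hle)) (le_of_lt hpos)
  have hnonneg : 0 ≤ dini φ s u := by
    rw [dini, liminf_eq]
    by_cases hbdd : BddAbove {a : ℝ | ∀ᶠ h in 𝓝[>] 0, a ≤ (φ (s + h * u) - φ s) / h}
    · exact le_csSup hbdd hev
    · rw [Real.sSup_of_not_bddAbove hbdd]
  exact hnonneg.not_gt h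

theorem QuasiconvexOn.le_max_of_mem_Icc_s2 {𝕜 β : Type*} [Field 𝕜] [LinearOrder 𝕜]
    [IsStrictOrderedRing 𝕜] [LinearOrder β] {s : Set 𝕜} {f : 𝕜 → β}
    (hf : QuasiconvexOn 𝕜 s f) {x y z : 𝕜} (hx : x ∈ s) (hz : z ∈ s) (hy : y ∈ Icc x z) :
    f y ≤ max (f x) (f z) :=
  ((hf _).ordConnected.out ⟨hx, le_max_left _ _⟩ ⟨hz, le_max_right _ _⟩ hy).2

namespace PseudoconvexOn

variable {φ : ℝ → ℝ} {I : Set ℝ}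

lemma exists_mem_Ioo_lt_of_lt (hpc : PseudoconvexOn φ I) {s t c : ℝ} (hs : s ∈ I) (ht : t ∈ I)
    (hφ : φ t < φ s) (hst : s < t) (hsc : s < c) : ∃ p ∈ Ioo s c, φ p < φ s := by
  have hsmall : ∀ᶠ h in 𝓝[>] 0, h ∈ Ioo 0 ((c - s) / (t - s)) :=
    Ioo_mem_nhdsGT (div_pos (sub_pos.2 hsc) (sub_pos.2 hst))
  obtain ⟨h, hlt, hpos, hh⟩ :=
    ((frequently_lt_of_dini_neg (hpc s hs t ht hφ)).and_eventually hsmall).exists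
  have hstep : h * (t - s) < c - s := (lt_div_iff₀ (sub_pos.2 hst)).1 hh
  exact ⟨s + h * (t - s), ⟨by nlinarith, by linarith⟩, hlt⟩

lemma exists_mem_Ioo_lt_of_gt (hpc : PseudoconvexOn φ I) {s t c : ℝ} (hs : s ∈ I) (ht : t ∈ I)
    (hφ : φ t < φ s) (hts : t < s) (hcs : c < s) : ∃ p ∈ Ioo c s, φ p < φ s := by
  have hsmall : ∀ᶠ h in 𝓝[>] 0, h ∈ Ioo 0 ((s - c) / (s - t)) :=
    Ioo_mem_nhdsGT (div_pos (sub_pos.2 hcs) (sub_pos.2 hts))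
  obtain ⟨h, hlt, hpos, hh⟩ :=
    ((frequently_lt_of_dini_neg (hpc s hs t ht hφ)).and_eventually hsmall).exists
  have hstep : h * (s - t) < s - c := (lt_div_iff₀ (sub_pos.2 hts)).1 hh
  exact ⟨s + h * (t - s), ⟨by linarith, by nlinarith⟩, hlt⟩

lemma le_max_of_isMinOn_Icc (hpc : PseudoconvexOn φ I) {x y u v m : ℝ} (hx : x ∈ I)
    (hy : y ∈ I) (hxu : x ≤ u) (huv : u < v) (hvy : v ≤ y) (hmI : m ∈ I) (hm : m ∈ Icc u v)
    (hmin : IsMinOn φ (Icc u v) m) : φ m ≤ max (φ x) (φ y) := by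
  by_contra! hgt
  rcases hm.1.lt_or_eq with hum | rfl
  · obtain ⟨p, hp, hpm⟩ := hpc.exists_mem_Ioo_lt_of_gt hmI hx
      ((le_max_left _ _).trans_lt hgt) (hxu.trans_lt hum) hum
    exact (hmin ⟨hp.1.le, hp.2.le.trans hm.2⟩).not_gt hpm
  · obtain ⟨p, hp, hpm⟩ := hpc.exists_mem_Ioo_lt_of_lt hmI hy
      ((le_max_right _ _).trans_lt hgt) (huv.trans_le hvy) huv
    exact (hmin ⟨hp.1.le, hp.2.le⟩).not_gt hpm

theorem quasiconvexOn_s2 (hpc : PseudoconvexOn φ I) (hI : I.OrdConnected)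
    (hlsc : LowerSemicontinuousOn φ I) : QuasiconvexOn ℝ I φ := by
  refine fun r ↦ convex_iff_ordConnected.2 ⟨fun x hx y hy z hz ↦ ⟨hI.out hx.1 hy.1 hz, ?_⟩⟩
  by_contra! hrz
  have hxz : x < z := hz.1.lt_of_ne (by rintro rfl; exact hrz.not_ge hx.2)
  have hzy : z < y := hz.2.lt_of_ne (by rintro rfl; exact hrz.not_ge hy.2)
  have hIoo : Ioo x y ⊆ I := Ioo_subset_Icc_self.trans (hI.out hx.1 hy.1)
  have hnhds : {w | w ∈ Ioo x y ∧ r < φ w} ∈ 𝓝 z := by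
    filter_upwards [Ioo_mem_nhds hxz hzy, eventually_nhdsWithin_iff.1
      (hlsc z (hIoo ⟨hxz, hzy⟩) r hrz)] with w hw hlt using ⟨hw, hlt (hIoo hw)⟩
  obtain ⟨l, u, ⟨hlz, hzu⟩, hsub⟩ := (mem_nhds_iff_exists_Ioo_subset.1 hnhds)
  obtain ⟨v, hzv, hvu⟩ := exists_between hzu
  have hIcc : Icc z v ⊆ {w | w ∈ Ioo x y ∧ r < φ w} := (Icc_subset_Ioo hlz hvu).trans hsub
  obtain ⟨m, hm, hmin⟩ := (hlsc.mono fun w hw ↦ hIoo (hIcc hw).1).exists_isMinOn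
    (nonempty_Icc.2 hzv.le) isCompact_Icc
  have hle := hpc.le_max_of_isMinOn_Icc hx.1 hy.1 hxz.le hzv (hIcc ⟨hzv.le, le_rfl⟩).1.2.le
    (hIoo (hIcc hm).1) hm hmin
  exact (hIcc hm).2.not_ge (hle.trans (max_le hx.2 hy.2))

lemma lt_left_of_right_lt (hpc : PseudoconvexOn φ I) (hq : QuasiconvexOn ℝ I φ) {x y z : ℝ}
    (hx : x ∈ I) (hz : z ∈ I) (hxy : x < y) (hyz : y < z) (hφ : φ z < φ y) : φ y < φ x := by
  have hle : φ y ≤ φ x :=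
    (le_max_iff.1 (hq.le_max_of_mem_Icc_s2 hx hz ⟨hxy.le, hyz.le⟩)).resolve_right hφ.not_ge
  refine hle.lt_of_ne fun heq ↦ ?_
  obtain ⟨w, hw, hwx⟩ := hpc.exists_mem_Ioo_lt_of_lt hx hz (hφ.trans_eq heq) (hxy.trans hyz) hxy
  have hwI : w ∈ I := hq.convex.ordConnected.out hx hz ⟨hw.1.le, (hw.2.trans hyz).le⟩
  have hy_le := hq.le_max_of_mem_Icc_s2 hwI hz ⟨hw.2.le, hyz.le⟩
  exact (hy_le.trans_lt (max_lt (hwx.trans_eq heq.symm) hφ)).false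

end PseudoconvexOn

theorem stmt2_general (I : Set ℝ) (hI : I.OrdConnected) (φ : ℝ → ℝ)
    (hlsc : LowerSemicontinuousOn φ I) (hpc : PseudoconvexOn φ I)
    (a b : ℝ) (hb : b ∈ I) (hab : a < b) (hφ : φ a > φ b) :
    StrictAntiOn φ (I ∩ Iic a) := by
  have hq := hpc.quasiconvexOn_s2 hI hlsc
  rintro x ⟨hx, -⟩ y ⟨hy, hya : y ≤ a⟩ hxy
  have hby : φ b < φ y := by
    rcases hya.lt_or_eq with hya | rfl
    · exact hφ.trans (hpc.lt_left_of_right_lt hq hy hb hya hab hφ)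
    · exact hφ
  exact hpc.lt_left_of_right_lt hq hx hb hxy (hya.trans_lt hab) hby

theorem stmt2 (I : Set ℝ) (hI : I.OrdConnected) (φ : ℝ → ℝ)
    (hlsc : LowerSemicontinuousOn φ I) (hpc : PseudoconvexOn φ I)
    (a b : ℝ) (ha : a ∈ I) (hb : b ∈ I) (hab : a < b) (hφ : φ a > φ b) :
    StrictAntiOn φ (I ∩ Iic a) :=
  stmt2_general I hI φ hlsc hpc a b hb hab hφ
end

section
/- Let φ : I → R be a lower semicontinuous pseudoconvex function (with respect to the lower Dini derivative) on an interval I ⊆ R. If the set Î of global minimizers of φ over I is empty, then φ is strictly monotone (either strictly increasing on all of I or strictly decreasing on all of I). -/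
open Filter Set

/-!
For `a < x < b` in `I` two inequalities hold. First `φ x ≤ max (φ a) (φ b)`: otherwise, by lower
semicontinuity, `φ` exceeds both `φ a` and `φ b` on a short interval `[x, q]`, and a minimizer of
`φ` there can neither lie left of `q` (pseudoconvexity towards `b` gives smaller values just to its
right) nor right of `x` (the same towards `a`). Second `min (φ a) (φ b) < φ x`: a minimizer of `φ`
on `[a, b]` is not a global one, so some `r ∉ [a, b]` has a smaller value, and descending towards
`r` forces the minimizer to be an endpoint; hence no interior point attains the minimum.
Together they make `φ` injective with every `φ x` strictly between `φ a` and `φ b`, and such a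
function is strictly monotone or strictly antitone.
-/

open Topology

section Order

variable {α β : Type*} [LinearOrder α] [LinearOrder β]

lemma left_lt_iff_of_mem_uIoo {a b x : β} (h : x ∈ uIoo a b) : a < x ↔ a < b := by
  rcases lt_or_ge a b with hab | hba
  · rw [uIoo_of_lt hab] at h
    exact iff_of_true h.1 hab
  · rw [uIoo_of_ge hba] at h
    exact iff_of_false (not_lt.2 h.2.le) (not_lt.2 hba)

lemma lt_right_iff_of_mem_uIoo {a b x : β} (h : x ∈ uIoo a b) : x < b ↔ a < b := by
  rcases lt_or_ge a b with hab | hba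
  · rw [uIoo_of_lt hab] at h
    exact iff_of_true h.2 hab
  · rw [uIoo_of_ge hba] at h
    exact iff_of_false (not_lt.2 h.1.le) (not_lt.2 hba)

variable {f : α → β} {s : Set α}

lemma lt_iff_lt_of_forall_mem_uIoo
    (hbtw : ∀ a ∈ s, ∀ x ∈ s, ∀ b ∈ s, a < x → x < b → f x ∈ uIoo (f a) (f b))
    {p a b q : α} (hp : p ∈ s) (ha : a ∈ s) (hb : b ∈ s) (hq : q ∈ s)
    (hpa : p ≤ a) (hab : a < b) (hbq : b ≤ q) : f a < f b ↔ f p < f q := by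
  have hbq' : f a < f b ↔ f a < f q := by
    rcases hbq.eq_or_lt with rfl | hbq
    · rfl
    · exact left_lt_iff_of_mem_uIoo (hbtw a ha b hb q hq hab hbq)
  have hpa' : f a < f q ↔ f p < f q := by
    rcases hpa.eq_or_lt with rfl | hpa
    · rfl
    · exact lt_right_iff_of_mem_uIoo (hbtw p hp a ha q hq hpa (hab.trans_le hbq))
  exact hbq'.trans hpa'

lemma strictMonoOn_or_strictAntiOn_of_forall_mem_uIoo (hinj : InjOn f s)
    (hbtw : ∀ a ∈ s, ∀ x ∈ s, ∀ b ∈ s, a < x → x < b → f x ∈ uIoo (f a) (f b)) :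
    StrictMonoOn f s ∨ StrictAntiOn f s := by
  refine or_iff_not_imp_right.2 fun hanti c hc d hd hcd => ?_
  obtain ⟨a, ha, b, hb, hab, hfab⟩ : ∃ a ∈ s, ∃ b ∈ s, a < b ∧ f a ≤ f b := by
    simpa [StrictAntiOn] using hanti
  have hfab : f a < f b := hfab.lt_of_ne fun h => hab.ne (hinj ha hb h)
  have hp : min a c ∈ s := by
    rcases min_choice a c with h | h <;> rw [h] <;> assumption
  have hq : max b d ∈ s := by
    rcases max_choice b d with h | h <;> rw [h] <;> assumption
  refine (lt_iff_lt_of_forall_mem_uIoo hbtw hp hc hd hq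
    (min_le_right a c) hcd (le_max_right b d)).2 ?_
  exact (lt_iff_lt_of_forall_mem_uIoo hbtw hp ha hb hq
    (min_le_left a c) hab (le_max_left b d)).1 hfab

end Order

lemma exists_lt_of_dini_neg {φ : ℝ → ℝ} {s u : ℝ} (h : dini φ s u < 0) {δ : ℝ} (hδ : 0 < δ) :
    ∃ k ∈ Ioo 0 δ, φ (s + k * u) < φ s := by
  have hcob : IsCoboundedUnder (· ≥ ·) (𝓝[>] 0) fun k : ℝ => (φ (s + k * u) - φ s) / k := by
    by_contra hnot
    -- otherwise the liminf would be the junk value `0`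
    exact h.ne (Real.liminf_of_not_isCoboundedUnder hnot)
  obtain ⟨k, hneg, hk⟩ :=
    ((frequently_lt_of_liminf_lt hcob h).and_eventually (Ioo_mem_nhdsGT hδ)).exists
  exact ⟨k, hk, sub_neg.1 (neg_of_div_neg_left hneg hk.1.le)⟩

namespace PseudoconvexOn

variable {φ : ℝ → ℝ} {I : Set ℝ}

lemma exists_lt_of_lt_right (hpc : PseudoconvexOn φ I) {s t c : ℝ} (hs : s ∈ I) (ht : t ∈ I)
    (hlt : φ t < φ s) (hsc : s < c) (hct : c ≤ t) : ∃ y ∈ Ioo s c, φ y < φ s := by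
  have hts : 0 < t - s := by linarith
  obtain ⟨k, hk, hky⟩ := exists_lt_of_dini_neg (hpc s hs t ht hlt) (div_pos (sub_pos.2 hsc) hts)
  have hkc : k * (t - s) < c - s := (lt_div_iff₀ hts).1 hk.2
  exact ⟨s + k * (t - s), ⟨by nlinarith [hk.1], by linarith⟩, hky⟩

lemma exists_lt_of_lt_left (hpc : PseudoconvexOn φ I) {s t c : ℝ} (hs : s ∈ I) (ht : t ∈ I)
    (hlt : φ t < φ s) (hcs : c < s) (htc : t ≤ c) : ∃ y ∈ Ioo c s, φ y < φ s := by
  have hts : t - s < 0 := by linarith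
  obtain ⟨k, hk, hky⟩ :=
    exists_lt_of_dini_neg (hpc s hs t ht hlt) (div_pos_of_neg_of_neg (sub_neg.2 hcs) hts)
  have hkc : c - s < k * (t - s) := (lt_div_iff_of_neg hts).1 hk.2
  exact ⟨s + k * (t - s), ⟨by linarith, by nlinarith [hk.1]⟩, hky⟩

lemma eq_right_of_isMinOn (hpc : PseudoconvexOn φ I) {p q m t : ℝ} (hmI : m ∈ I)
    (hm : m ∈ Icc p q) (hmin : IsMinOn φ (Icc p q) m) (ht : t ∈ I) (hqt : q ≤ t)
    (hlt : φ t < φ m) : m = q := by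
  by_contra hmq
  obtain ⟨y, hy, hφy⟩ := hpc.exists_lt_of_lt_right hmI ht hlt (hm.2.lt_of_ne hmq) hqt
  exact hφy.not_ge (isMinOn_iff.1 hmin y ⟨hm.1.trans hy.1.le, hy.2.le⟩)

lemma eq_left_of_isMinOn (hpc : PseudoconvexOn φ I) {p q m t : ℝ} (hmI : m ∈ I)
    (hm : m ∈ Icc p q) (hmin : IsMinOn φ (Icc p q) m) (ht : t ∈ I) (htp : t ≤ p)
    (hlt : φ t < φ m) : m = p := by
  by_contra hpm
  obtain ⟨y, hy, hφy⟩ := hpc.exists_lt_of_lt_left hmI ht hlt (hm.1.lt_of_ne' hpm) htp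
  exact hφy.not_ge (isMinOn_iff.1 hmin y ⟨hy.1.le, hy.2.le.trans hm.2⟩)

lemma le_max_of_mem_Ioo (hI : I.OrdConnected) (hlsc : LowerSemicontinuousOn φ I)
    (hpc : PseudoconvexOn φ I) {a b x : ℝ} (ha : a ∈ I) (hb : b ∈ I) (hx : x ∈ Ioo a b) :
    φ x ≤ max (φ a) (φ b) := by
  by_contra! hgt
  have hIx : I ∈ 𝓝 x :=
    mem_of_superset (Ioo_mem_nhds hx.1 hx.2) (Ioo_subset_Icc_self.trans (hI.out ha hb))
  have hS : {y | max (φ a) (φ b) < φ y} ∩ Ioo a b ∈ 𝓝 x :=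
    inter_mem (nhdsWithin_eq_nhds.2 hIx ▸ hlsc x (hI.out ha hb (Ioo_subset_Icc_self hx)) _ hgt)
      (Ioo_mem_nhds hx.1 hx.2)
  obtain ⟨l, u, hxlu, hluS⟩ := mem_nhds_iff_exists_Ioo_subset.1 hS
  obtain ⟨q, hxq, hqu⟩ := exists_between hxlu.2
  have hJ : Icc x q ⊆ {y | max (φ a) (φ b) < φ y} ∩ Ioo a b :=
    (Icc_subset_Ioo hxlu.1 hqu).trans hluS
  have hJI : Icc x q ⊆ I := fun y hy => hI.out ha hb (Ioo_subset_Icc_self (hJ hy).2)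
  obtain ⟨m, hm, hmin⟩ := (hlsc.mono hJI).exists_isMinOn (nonempty_Icc.2 hxq.le) isCompact_Icc
  have hφm : max (φ a) (φ b) < φ m := (hJ hm).1
  have hqb : q ≤ b := (hJ (right_mem_Icc.2 hxq.le)).2.2.le
  have hmq : m = q :=
    hpc.eq_right_of_isMinOn (hJI hm) hm hmin hb hqb ((le_max_right _ _).trans_lt hφm)
  have hmx : m = x :=
    hpc.eq_left_of_isMinOn (hJI hm) hm hmin ha hx.1.le ((le_max_left _ _).trans_lt hφm)
  exact hxq.ne (hmx.symm.trans hmq)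

lemma eq_or_eq_of_isMinOn (hpc : PseudoconvexOn φ I) (hne : ∀ x ∈ I, ∃ r ∈ I, φ r < φ x)
    {a b m : ℝ} (hab : Icc a b ⊆ I) (hm : m ∈ Icc a b) (hmin : IsMinOn φ (Icc a b) m) :
    m = a ∨ m = b := by
  obtain ⟨r, hr, hφr⟩ := hne m (hab hm)
  have hrab : r ∉ Icc a b := fun hr' => hφr.not_ge (isMinOn_iff.1 hmin r hr')
  rcases lt_or_ge r a with hra | har
  · exact Or.inl (hpc.eq_left_of_isMinOn (hab hm) hm hmin hr hra.le hφr)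
  · have hbr : b < r := lt_of_not_ge fun hrb => hrab ⟨har, hrb⟩
    exact Or.inr (hpc.eq_right_of_isMinOn (hab hm) hm hmin hr hbr.le hφr)

lemma min_lt_of_mem_Ioo (hI : I.OrdConnected) (hlsc : LowerSemicontinuousOn φ I)
    (hpc : PseudoconvexOn φ I) (hne : ∀ x ∈ I, ∃ r ∈ I, φ r < φ x) {a b x : ℝ} (ha : a ∈ I)
    (hb : b ∈ I) (hx : x ∈ Ioo a b) : min (φ a) (φ b) < φ x := by
  have hab : Icc a b ⊆ I := hI.out ha hb
  have hle : a ≤ b := (hx.1.trans hx.2).le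
  obtain ⟨m, hm, hmin⟩ := (hlsc.mono hab).exists_isMinOn (nonempty_Icc.2 hle) isCompact_Icc
  have hφm : min (φ a) (φ b) ≤ φ m := by
    rcases hpc.eq_or_eq_of_isMinOn hne hab hm hmin with rfl | rfl
    exacts [min_le_left _ _, min_le_right _ _]
  by_contra! hxm
  have hxmin : IsMinOn φ (Icc a b) x :=
    isMinOn_iff.2 fun y hy => hxm.trans (hφm.trans (isMinOn_iff.1 hmin y hy))
  rcases hpc.eq_or_eq_of_isMinOn hne hab (Ioo_subset_Icc_self hx) hxmin with rfl | rfl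
  exacts [lt_irrefl _ hx.1, lt_irrefl _ hx.2]

lemma injOn (hI : I.OrdConnected) (hlsc : LowerSemicontinuousOn φ I)
    (hpc : PseudoconvexOn φ I) (hne : ∀ x ∈ I, ∃ r ∈ I, φ r < φ x) : InjOn φ I := by
  have hlt : ∀ a ∈ I, ∀ b ∈ I, a < b → φ a ≠ φ b := by
    intro a ha b hb hab hφ
    have hx : (a + b) / 2 ∈ Ioo a b := ⟨by linarith, by linarith⟩
    have hmin := hpc.min_lt_of_mem_Ioo hI hlsc hne ha hb hx
    have hmax := hpc.le_max_of_mem_Ioo hI hlsc ha hb hx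
    rw [hφ, min_self] at hmin
    rw [hφ, max_self] at hmax
    exact hmin.not_ge hmax
  intro a ha b hb hφ
  by_contra hab
  rcases lt_or_gt_of_ne hab with hab | hba
  exacts [hlt a ha b hb hab hφ, hlt b hb a ha hba hφ.symm]

lemma mem_uIoo (hI : I.OrdConnected) (hlsc : LowerSemicontinuousOn φ I)
    (hpc : PseudoconvexOn φ I) (hne : ∀ x ∈ I, ∃ r ∈ I, φ r < φ x) {a x b : ℝ} (ha : a ∈ I)
    (hx : x ∈ I) (hb : b ∈ I) (hax : a < x) (hxb : x < b) : φ x ∈ uIoo (φ a) (φ b) := by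
  have hinj := hpc.injOn hI hlsc hne
  have hφxa : φ x ≠ φ a := fun h => hax.ne' (hinj hx ha h)
  have hφxb : φ x ≠ φ b := fun h => hxb.ne (hinj hx hb h)
  refine ⟨hpc.min_lt_of_mem_Ioo hI hlsc hne ha hb ⟨hax, hxb⟩,
    (hpc.le_max_of_mem_Ioo hI hlsc ha hb ⟨hax, hxb⟩).lt_of_ne ?_⟩
  rcases max_choice (φ a) (φ b) with h | h <;> rw [h] <;> assumption

end PseudoconvexOn

theorem stmt4 (I : Set ℝ) (hI : I.OrdConnected) (φ : ℝ → ℝ)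
    (hlsc : LowerSemicontinuousOn φ I) (hpc : PseudoconvexOn φ I)
    (hempty : ArgminSet φ I = ∅) :
    StrictMonoOn φ I ∨ StrictAntiOn φ I := by
  have hne : ∀ x ∈ I, ∃ r ∈ I, φ r < φ x := by
    intro x hx
    by_contra! hmin
    exact (hempty ▸ ⟨hx, hmin⟩ : x ∈ (∅ : Set ℝ))
  exact strictMonoOn_or_strictAntiOn_of_forall_mem_uIoo (hpc.injOn hI hlsc hne)
    fun a ha x hx b hb => hpc.mem_uIoo hI hlsc hne ha hx hb
end

section
/- Let φ : I → R be a lower semicontinuous function on an interval I ⊆ R that is pseudoconvex with respect to the lower Dini derivative, and suppose s₁ < b < s₂ are points of I such that φ(t) > φ(a) for all t ∈ (s₁, s₂) for some a ∈ I with a < b and φ(a) < φ(b). Then φ is strictly monotone increasing on (s₁, s₂). -/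
/-!
Suppose `x < y` in `(s₁, s₂)` but `φ y ≤ φ x`. By lower semicontinuity `φ` attains its minimum
over `[x, y]` at some `w > x`. Since `φ a < φ w` for all such `w`, the point `a` lies to the left
of `(s₁, s₂)`, and pseudoconvexity yields points just left of `w`, still in `[x, y]`, where `φ`
is smaller than at `w`, contradicting minimality.
-/

open Filter Set

open Topology

theorem dini_nonneg_of_eventually_nonneg {φ : ℝ → ℝ} {s u : ℝ}
    (h : ∀ᶠ h in 𝓝[>] 0, 0 ≤ (φ (s + h * u) - φ s) / h) : 0 ≤ dini φ s u := by
  rw [dini, liminf_eq]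
  by_cases hbdd : BddAbove {c : ℝ | ∀ᶠ h in 𝓝[>] 0, c ≤ (φ (s + h * u) - φ s) / h}
  · exact le_csSup hbdd h
  -- unbounded set of eventual lower bounds: `sSup` takes the junk value `0`
  · rw [Real.sSup_of_not_bddAbove hbdd]

theorem IsMinOn.stationary {φ : ℝ → ℝ} {S : Set ℝ} {s : ℝ} (hmin : IsMinOn φ S s) :
    Stationary φ S s := by
  rintro u ⟨δ, hδ, hmem⟩
  apply dini_nonneg_of_eventually_nonneg
  filter_upwards [Ioo_mem_nhdsGT hδ] with h hh
  exact div_nonneg (sub_nonneg.2 (hmin (hmem h hh))) hh.1.le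

theorem admissible_Icc_of_neg {x y w u : ℝ} (hxw : x < w) (hwy : w ≤ y) (hu : u < 0) :
    Admissible (Icc x y) w u := by
  refine ⟨(w - x) / -u, div_pos (sub_pos.2 hxw) (neg_pos.2 hu), fun h ⟨hh0, hhδ⟩ => ⟨?_, ?_⟩⟩
  · have := (lt_div_iff₀ (neg_pos.2 hu)).1 hhδ
    linarith
  · nlinarith

theorem exists_mem_Ioc_isMinOn_Icc {φ : ℝ → ℝ} {x y : ℝ} (hxy : x < y)
    (hlsc : LowerSemicontinuousOn φ (Icc x y)) (hyx : φ y ≤ φ x) :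
    ∃ w ∈ Ioc x y, IsMinOn φ (Icc x y) w := by
  obtain ⟨w, hw, hmin⟩ := hlsc.exists_isMinOn (nonempty_Icc.2 hxy.le) isCompact_Icc
  rcases hw.1.eq_or_lt with rfl | hxw
  · exact ⟨y, ⟨hxy, le_rfl⟩, fun t ht => hyx.trans (hmin ht)⟩
  · exact ⟨w, ⟨hxw, hw.2⟩, hmin⟩

theorem PseudoconvexOn.le_of_isMinOn_Icc {φ : ℝ → ℝ} {I : Set ℝ} (hpc : PseudoconvexOn φ I)
    {a x y w : ℝ} (ha : a ∈ I) (hw : w ∈ I) (hmin : IsMinOn φ (Icc x y) w)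
    (hxw : x < w) (hwy : w ≤ y) (haw : a < w) : φ w ≤ φ a := by
  by_contra! hlt
  have := hmin.stationary (a - w) (admissible_Icc_of_neg hxw hwy (sub_neg.2 haw))
  exact (hpc w hw a ha hlt).not_ge this

theorem stmt15_general (I : Set ℝ) (hI : I.OrdConnected) (φ : ℝ → ℝ)
    (hlsc : LowerSemicontinuousOn φ I) (hpc : PseudoconvexOn φ I)
    (s₁ b s₂ a : ℝ) (hs₁ : s₁ ∈ I) (hs₂ : s₂ ∈ I) (ha : a ∈ I)
    (h₂ : b < s₂) (hab : a < b)
    (hbig : ∀ t ∈ Ioo s₁ s₂, φ a < φ t) :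
    StrictMonoOn φ (Ioo s₁ s₂) := by
  have has₁ : a ≤ s₁ := by
    by_contra! h
    exact (hbig a ⟨h, hab.trans h₂⟩).false
  have hsub : Ioo s₁ s₂ ⊆ I := Ioo_subset_Icc_self.trans (hI.out hs₁ hs₂)
  intro x hx y hy hxy
  by_contra! hyx
  have hxy_sub : Icc x y ⊆ Ioo s₁ s₂ := ordConnected_Ioo.out hx hy
  obtain ⟨w, ⟨hxw, hwy⟩, hmin⟩ :=
    exists_mem_Ioc_isMinOn_Icc hxy (hlsc.mono (hxy_sub.trans hsub)) hyx
  have hw : w ∈ Ioo s₁ s₂ := hxy_sub ⟨hxw.le, hwy⟩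
  have hwa : φ w ≤ φ a :=
    hpc.le_of_isMinOn_Icc ha (hsub hw) hmin hxw hwy (by linarith [hx.1])
  exact (hbig w hw).not_ge hwa

theorem stmt15 (I : Set ℝ) (hI : I.OrdConnected) (φ : ℝ → ℝ)
    (hlsc : LowerSemicontinuousOn φ I) (hpc : PseudoconvexOn φ I)
    (s₁ b s₂ a : ℝ) (hs₁ : s₁ ∈ I) (hb : b ∈ I) (hs₂ : s₂ ∈ I) (ha : a ∈ I)
    (h₁ : s₁ < b) (h₂ : b < s₂) (hab : a < b) (hφab : φ a < φ b)
    (hbig : ∀ t ∈ Ioo s₁ s₂, φ a < φ t) :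
    StrictMonoOn φ (Ioo s₁ s₂) :=
  stmt15_general I hI φ hlsc hpc s₁ b s₂ a hs₁ hs₂ ha h₂ hab hbig
end
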